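/- arXiv:1811.00361 — 2 statements merged into one kernel-verified Lean document; each statement's English description precedes it below -/
import Mathlib

section
/- For every integer p ≥ 2, ∑_{k=1}^{p-1} csc²(πk/p) = (p² − 1)/3. -/
open Real Finset

open Classical in
noncomputable def saw (x : ℝ) : ℝ := if ∃ n : ℤ, x = n then 0 else x - ⌊x⌋ - 1/2

noncomputable def dedekindSum (a b : ℕ) : ℝ :=
  ∑ k ∈ Finset.Ico 1 b, saw (k * a / b) * saw (k / b)

noncomputable def S (p q : ℕ) (r : ℤ) : ℝ :=
  ∑ k ∈ Finset.Ico 1 p,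
    Real.cos (π * k * r / p) / (Real.sin (π * k * q / p) * Real.sin (π * k / p))

/-!
With `ζ = exp (2πi/p)` and `z = ζ^k`, one has `csc² (πk/p) = -4 z / (z - 1)²`, and for a `p`-th
root of unity `z ≠ 1` also `1 / (z - 1) = (1/p) ∑_{j<p} j z^j`. Hence `csc² (πk/p) = -(4/p²) G(ζ^k)`
for the polynomial `G(z) = z (∑_{j<p} j z^j)²`. Averaging a polynomial over all `p`-th roots of
unity keeps exactly its coefficients at exponents divisible by `p`; for `G` these are the terms
`i j z^(i+j+1)` with `i + j = p - 1`, so `∑_{k<p} G(ζ^k) = p ∑_{i+j=p-1} i j = p² (p-1)(p-2)/6`.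
Removing the term `k = 0`, which is `(p(p-1)/2)²`, gives the result.
-/

open Complex

-- Both sides are `0` when `sin z = 0`.
theorem Complex.inv_sin_sq (z : ℂ) :
    (sin z)⁻¹ ^ 2 = -4 * exp (2 * z * I) / (exp (2 * z * I) - 1) ^ 2 := by
  have h2 : exp (2 * z * I) = exp (z * I) ^ 2 := by rw [← Complex.exp_nat_mul]; ring_nf
  have hsin : sin z ^ 2 = -(exp (z * I) ^ 2 - 1) ^ 2 / (4 * exp (z * I) ^ 2) := by
    rw [sin, neg_mul, exp_neg]
    field_simp
    linear_combination 4 * (exp (z * I) ^ 2 - 1) ^ 2 * I_sq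
  rw [h2, inv_pow, hsin, inv_div, div_neg, neg_mul, neg_div]

section CommRing
variable {R : Type*} [CommRing R]

theorem sub_one_mul_sum_range_natCast_mul_pow (z : R) (n : ℕ) :
    (z - 1) * ∑ j ∈ range n, (j : R) * z ^ j = (n - 1) * z ^ n - ∑ j ∈ range n, z ^ j + 1 := by
  induction n with
  | zero => simp
  | succ n ih =>
    rw [sum_range_succ, sum_range_succ, mul_add, ih]
    push_cast
    ring

theorem sum_range_natCast_mul_two (n : ℕ) : (∑ i ∈ range n, (i : R)) * 2 = n * (n - 1) := by
  induction n with
  | zero => simp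
  | succ n ih => rw [sum_range_succ, add_mul, ih]; push_cast; ring

theorem Finset.Nat.sum_antidiagonal_natCast_fst_mul_two (n : ℕ) :
    (∑ x ∈ antidiagonal n, (x.1 : R)) * 2 = (n + 1) * n := by
  rw [Nat.sum_antidiagonal_eq_sum_range_succ_mk, sum_range_natCast_mul_two]
  push_cast
  ring

theorem Finset.Nat.sum_antidiagonal_natCast_fst_mul_snd_mul_six (n : ℕ) :
    (∑ x ∈ antidiagonal n, (x.1 : R) * x.2) * 6 = (n + 1) * n * (n - 1) := by
  induction n with
  | zero => simp
  | succ n ih =>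
    have hfst := sum_antidiagonal_natCast_fst_mul_two (R := R) n
    rw [Nat.sum_antidiagonal_succ']
    simp only [Nat.cast_add, Nat.cast_one, Nat.cast_zero, mul_zero, zero_add, mul_add_one,
      sum_add_distrib]
    linear_combination ih + 3 * hfst

variable [IsDomain R]

theorem geom_sum_eq_zero_of_pow_eq_one {z : R} {n : ℕ} (hz : z ^ n = 1) (hz1 : z ≠ 1) :
    ∑ j ∈ range n, z ^ j = 0 := by
  have h := geom_sum_mul z n
  rw [hz, sub_self] at h
  exact (mul_eq_zero.mp h).resolve_right (sub_ne_zero.mpr hz1)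

theorem sub_one_mul_sum_range_natCast_mul_pow_of_pow_eq_one {z : R} {n : ℕ} (hz : z ^ n = 1)
    (hz1 : z ≠ 1) : (z - 1) * ∑ j ∈ range n, (j : R) * z ^ j = n := by
  rw [sub_one_mul_sum_range_natCast_mul_pow, geom_sum_eq_zero_of_pow_eq_one hz hz1, hz]
  ring

theorem IsPrimitiveRoot.sum_range_pow_pow {ζ : R} {n : ℕ} (hζ : IsPrimitiveRoot ζ n) (m : ℕ) :
    ∑ k ∈ range n, (ζ ^ m) ^ k = if n ∣ m then (n : R) else 0 := by
  split_ifs with h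
  · simp [(hζ.pow_eq_one_iff_dvd m).mpr h]
  · refine geom_sum_eq_zero_of_pow_eq_one ?_ (mt (hζ.pow_eq_one_iff_dvd m).mp h)
    rw [← pow_mul, mul_comm, pow_mul, hζ.pow_eq_one, one_pow]

theorem IsPrimitiveRoot.sum_range_pow_mul_sum_range_natCast_mul_pow_sq {ζ : R} {n : ℕ}
    (hζ : IsPrimitiveRoot ζ n) :
    ∑ k ∈ range n, ζ ^ k * (∑ j ∈ range n, (j : R) * (ζ ^ k) ^ j) ^ 2
      = n * ∑ x ∈ antidiagonal (n - 1), (x.1 : R) * x.2 := by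
  obtain _ | n := n
  · simp
  have hexpand (k : ℕ) : ζ ^ k * (∑ j ∈ range (n + 1), (j : R) * (ζ ^ k) ^ j) ^ 2
      = ∑ i ∈ range (n + 1), ∑ j ∈ range (n + 1), (i : R) * j * (ζ ^ (i + j + 1)) ^ k := by
    rw [sq, sum_mul_sum, mul_sum]
    refine sum_congr rfl fun i _ => ?_
    rw [mul_sum]
    refine sum_congr rfl fun j _ => ?_
    ring
  have hinner {i : ℕ} (hi : i ≤ n) :
      ∑ j ∈ range (n + 1), (i : R) * j * ∑ k ∈ range (n + 1), (ζ ^ (i + j + 1)) ^ k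
        = (n + 1) * (i * (n - i : ℕ)) := by
    simp_rw [hζ.sum_range_pow_pow]
    rw [sum_eq_single_of_mem (n - i) (mem_range.mpr (by omega)), if_pos ⟨1, by omega⟩]
    · push_cast
      ring
    · intro j hj hji
      have hjn := mem_range.mp hj
      refine mul_eq_zero_of_right _ (if_neg fun hdvd => hji ?_)
      have := Nat.eq_of_dvd_of_lt_two_mul (by omega) hdvd (by omega)
      omega
  calc _ = ∑ k ∈ range (n + 1), ∑ i ∈ range (n + 1), ∑ j ∈ range (n + 1),
        (i : R) * j * (ζ ^ (i + j + 1)) ^ k := sum_congr rfl fun k _ => hexpand k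
    _ = ∑ i ∈ range (n + 1), ∑ j ∈ range (n + 1),
        (i : R) * j * ∑ k ∈ range (n + 1), (ζ ^ (i + j + 1)) ^ k := by
      simp_rw [mul_sum]
      rw [sum_comm]
      exact sum_congr rfl fun i _ => sum_comm
    _ = ∑ i ∈ range (n + 1), ((n : R) + 1) * (i * (n - i : ℕ)) :=
      sum_congr rfl fun i hi => hinner (Nat.lt_succ_iff.mp (mem_range.mp hi))
    _ = _ := by
      rw [Nat.sum_antidiagonal_eq_sum_range_succ_mk, mul_sum]
      simp

end CommRing

theorem inv_sub_one_eq_sum_range_natCast_mul_pow_div {K : Type*} [Field K] {z : K} {n : ℕ}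
    (hz : z ^ n = 1) (hz1 : z ≠ 1) (hn : (n : K) ≠ 0) :
    (z - 1)⁻¹ = (∑ j ∈ range n, (j : K) * z ^ j) / n := by
  rw [eq_div_iff hn, ← sub_one_mul_sum_range_natCast_mul_pow_of_pow_eq_one hz hz1,
    inv_mul_cancel_left₀ (sub_ne_zero.mpr hz1)]

theorem stmt9 (p : ℕ) (hp : 2 ≤ p) :
    ∑ k ∈ Finset.Ico 1 p, (1 / Real.sin (π * k / p)) ^ 2 = ((p : ℝ) ^ 2 - 1) / 3 := by
  set ζ : ℂ := exp (2 * π * I / p)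
  have hζ : IsPrimitiveRoot ζ p := isPrimitiveRoot_exp p (by omega)
  have hp0 : (p : ℂ) ≠ 0 := by exact_mod_cast (by omega : p ≠ 0)
  set F : ℂ → ℂ := fun z ↦ ∑ j ∈ range p, (j : ℂ) * z ^ j
  have hcsc_sq : ∀ k ∈ Ico 1 p,
      (((1 / Real.sin (π * k / p)) ^ 2 : ℝ) : ℂ) = -4 / (p : ℂ) ^ 2 * (ζ ^ k * F (ζ ^ k) ^ 2) := by
    intro k hk
    obtain ⟨hk0, hkp⟩ := mem_Ico.mp hk
    have hk1 : ζ ^ k ≠ 1 := hζ.pow_ne_one_of_pos_of_lt (by omega) hkp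
    have hζk : (ζ ^ k) ^ p = 1 := by rw [← pow_mul, mul_comm, pow_mul, hζ.pow_eq_one, one_pow]
    have hexp : exp (2 * (π * k / p : ℂ) * I) = ζ ^ k := by
      rw [← Complex.exp_nat_mul]
      ring_nf
    push_cast
    rw [one_div, inv_sin_sq, hexp, div_eq_mul_inv _ (_ ^ 2), ← inv_pow,
      inv_sub_one_eq_sum_range_natCast_mul_pow_div hζk hk1 hp0]
    ring
  have hsum : ∑ k ∈ Ico 1 p, ζ ^ k * F (ζ ^ k) ^ 2
      = p * ∑ x ∈ antidiagonal (p - 1), (x.1 : ℂ) * x.2 - (∑ j ∈ range p, (j : ℂ)) ^ 2 := by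
    rw [sum_Ico_eq_sub _ (by omega), sum_range_one,
      hζ.sum_range_pow_mul_sum_range_natCast_mul_pow_sq]
    simp [F]
  have hconv : ∑ x ∈ antidiagonal (p - 1), (x.1 : ℂ) * x.2 = p * (p - 1) * (p - 2) / 6 := by
    have h6 := Nat.sum_antidiagonal_natCast_fst_mul_snd_mul_six (R := ℂ) (p - 1)
    rw [Nat.cast_pred (by omega)] at h6
    linear_combination h6 / 6
  have hgauss : ∑ j ∈ range p, (j : ℂ) = p * (p - 1) / 2 := by
    linear_combination sum_range_natCast_mul_two (R := ℂ) p / 2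
  apply ofReal_injective
  rw [ofReal_sum, sum_congr rfl hcsc_sq, ← mul_sum, hsum, hconv, hgauss]
  push_cast
  field_simp
  ring
end

section
/- For positive integers p, m with m < p: ∑_{k=0}^{p-1} sin^{2m}(πk/p) = 2^{1−2m}·p·C(2m−1, m−1). -/
/-!
Expand `(2 sin x) ^ (2m) = (-1) ^ m (e^{ix} - e^{-ix}) ^ (2m)` binomially. At `x = πk/p` the
summands become powers of the primitive `p`-th root of unity `ζ = e^{2πi/p}`, and summing over `k`
kills every term except the constant one, because the exponents `m - j` satisfy `|m - j| ≤ m < p`.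
Hence `4 ^ m ∑ sin^(2m)(πk/p) = p * C(2m, m)`, and `C(2m, m) = 2 C(2m-1, m-1)`.
-/

open Real Finset

theorem Nat.choose_two_mul_self_eq_two_mul {m : ℕ} (hm : 0 < m) :
    (2 * m).choose m = 2 * (2 * m - 1).choose (m - 1) := by
  obtain ⟨n, rfl⟩ := Nat.exists_eq_add_of_lt hm
  rw [show 2 * (0 + n + 1) = 2 * n + 1 + 1 by ring, show 0 + n + 1 = n + 1 by ring,
    Nat.choose_succ_succ, Nat.choose_symm_half]
  simp [two_mul]

theorem IsPrimitiveRoot.sum_zpow_pow_range {K : Type*} [Field K] {ζ : K} {p : ℕ}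
    (hζ : IsPrimitiveRoot ζ p) (n : ℤ) :
    ∑ k ∈ range p, (ζ ^ n) ^ k = if (p : ℤ) ∣ n then (p : K) else 0 := by
  split_ifs with hdvd
  · simp [(hζ.zpow_eq_one_iff_dvd n).mpr hdvd]
  · have hne : ζ ^ n ≠ 1 := fun h => hdvd ((hζ.zpow_eq_one_iff_dvd n).mp h)
    have hpow : (ζ ^ n) ^ p = 1 := by
      rw [← zpow_natCast, ← zpow_mul, mul_comm, zpow_mul, zpow_natCast, hζ.pow_eq_one, one_zpow]
    rw [geom_sum_eq hne, hpow, sub_self, zero_div]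

open Complex in
theorem Complex.two_mul_sin_pow_two_mul (z : ℂ) (m : ℕ) :
    (2 * sin z) ^ (2 * m) = ∑ j ∈ range (2 * m + 1),
      (-1) ^ (m + j) * ((2 * m).choose j : ℂ) * exp (2 * z * I) ^ ((m : ℤ) - j) := by
  set w := exp (z * I)
  have hw : w ≠ 0 := exp_ne_zero _
  have hsin : 2 * sin z = -I * (-w⁻¹ + w) := by
    rw [sin, neg_mul, exp_neg]; ring
  have hexp : exp (2 * z * I) = w ^ 2 := by
    rw [← exp_nat_mul]; ring_nf
  rw [hsin, mul_pow, pow_mul, neg_sq, I_sq, add_pow, mul_sum]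
  refine sum_congr rfl fun j hj => ?_
  have hj : j ≤ 2 * m := Nat.lt_succ_iff.mp (mem_range.mp hj)
  have hzpow : w ^ (2 * m - j) * (w ^ j)⁻¹ = (w ^ 2) ^ ((m : ℤ) - j) := by
    rw [← zpow_natCast, ← zpow_natCast, ← zpow_neg, ← zpow_add₀ hw, ← zpow_natCast, ← zpow_mul]
    push_cast [Nat.cast_sub hj]
    ring_nf
  rw [hexp, ← hzpow, neg_pow w⁻¹, inv_pow, pow_add]
  ring

theorem Real.sum_range_two_mul_sin_pow_two_mul {p m : ℕ} (hmp : m < p) :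
    ∑ k ∈ range p, (2 * sin (π * k / p)) ^ (2 * m) = p * (2 * m).choose m := by
  set ζ := Complex.exp (2 * π * Complex.I / p)
  have hζ : IsPrimitiveRoot ζ p := Complex.isPrimitiveRoot_exp p (by omega)
  have hexp (k : ℕ) : Complex.exp (2 * (π * k / p) * Complex.I) = ζ ^ k := by
    have hp : (p : ℂ) ≠ 0 := Nat.cast_ne_zero.mpr (by omega)
    rw [← Complex.exp_nat_mul]; congr 1; field_simp
  have hdvd {j : ℕ} (hj : j ∈ range (2 * m + 1)) : (p : ℤ) ∣ (m : ℤ) - j ↔ j = m := by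
    have hj := mem_range.mp hj
    refine ⟨fun h => ?_, fun h => by simp [h]⟩
    have := Int.eq_zero_of_abs_lt_dvd h (abs_sub_lt_iff.mpr ⟨by omega, by omega⟩)
    omega
  apply Complex.ofReal_injective
  push_cast [Complex.ofReal_sin]
  simp_rw [Complex.two_mul_sin_pow_two_mul, hexp]
  calc ∑ k ∈ range p, ∑ j ∈ range (2 * m + 1),
        (-1) ^ (m + j) * ((2 * m).choose j : ℂ) * (ζ ^ k) ^ ((m : ℤ) - j)
      = ∑ j ∈ range (2 * m + 1), (-1) ^ (m + j) * ((2 * m).choose j : ℂ) *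
          ∑ k ∈ range p, (ζ ^ ((m : ℤ) - j)) ^ k := by
        rw [sum_comm]
        refine sum_congr rfl fun j _ => ?_
        simp only [mul_sum, ← zpow_natCast, ← zpow_mul, mul_comm]
    _ = ∑ j ∈ range (2 * m + 1), (-1) ^ (m + j) * ((2 * m).choose j : ℂ) *
          if j = m then (p : ℂ) else 0 := by
        refine sum_congr rfl fun j hj => ?_
        rw [hζ.sum_zpow_pow_range, if_congr (hdvd hj) rfl rfl]
    _ = p * (2 * m).choose m := by
        simp only [mul_ite, mul_zero, sum_ite_eq', mem_range, ← two_mul, pow_mul, neg_one_sq]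
        rw [if_pos (by omega)]
        ring

theorem stmt17_general (p m : ℕ) (hm : 0 < m) (hmp : m < p) :
    ∑ k ∈ Finset.range p, Real.sin (π * k / p) ^ (2 * m) =
      (2 : ℝ) ^ (1 - 2 * (m : ℤ)) * p * (Nat.choose (2 * m - 1) (m - 1)) := by
  have h := sum_range_two_mul_sin_pow_two_mul hmp
  rw [Nat.choose_two_mul_self_eq_two_mul hm] at h
  simp only [mul_pow, ← mul_sum] at h
  have h2 : (2 : ℝ) ^ (1 - 2 * (m : ℤ)) = 2 / 2 ^ (2 * m) := by
    rw [zpow_sub₀ two_ne_zero, zpow_one]; norm_cast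
  rw [h2, div_mul_eq_mul_div, div_mul_eq_mul_div, eq_div_iff (by positivity)]
  push_cast at h
  linear_combination h

theorem stmt17 (p m : ℕ) (hp : 0 < p) (hm : 0 < m) (hmp : m < p) :
    ∑ k ∈ Finset.range p, Real.sin (π * k / p) ^ (2 * m) =
      (2 : ℝ) ^ (1 - 2 * (m : ℤ)) * p * (Nat.choose (2 * m - 1) (m - 1)) :=
  stmt17_general p m hm hmp
end
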